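/- arXiv:2501.12512 — 5 statements merged into one kernel-verified Lean document; each statement's English description precedes it below -/
import Mathlib

section
/- For any two groups A and B, the kernel of the natural homomorphism A * B → A × B (induced by the inclusions into the factors) is a free group. -/
/-!
Let `A ∗ B` act on `A × B` through `toProd`. The kernel is the stabilizer of `(1, 1)`, a vertex
group of the (connected) action groupoid, so by the Nielsen–Schreier machinery it suffices that this
groupoid is free. It is free on the arrows `(1, b) ⟶ (a, b)` labelled `inl a` and
`(a, 1) ⟶ (a, b)` labelled `inr b` (`a, b ≠ 1`). Indeed, a functor to a group `X` is a homomorphism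
`A ∗ B →* (A × B → X) ⋊ A ∗ B` splitting the projection, i.e. such a crossed homomorphism on `A`
and one on `B`. Since `A` acts freely on `A × B` with transversal `{1} × B`, a crossed homomorphism
on `A` is the coboundary of a potential `A × B → X`, determined by, and freely prescribable by, its
values on the arrows leaving `{1} × B`; likewise for `B`.
-/

universe u

open Monoid CategoryTheory ActionCategory

namespace CategoryTheory.ActionCategory

theorem isFreeGroup_stabilizer {G X : Type u} [Group G] [MulAction G X]
    [MulAction.IsPretransitive G X] [IsFreeGroupoid (ActionCategory G X)] (x : X) :
    IsFreeGroup (MulAction.stabilizer G x) := by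
  have : Nonempty X := ⟨x⟩
  -- `endIsFreeOfConnectedFree` wants connectedness for the category underlying the groupoid.
  have : @IsConnected (ActionCategory G X) Groupoid.toCategory :=
    (inferInstance : IsConnected (ActionCategory G X))
  refine @IsFreeGroup.ofMulEquiv _ _
    (IsFreeGroupoid.endIsFreeOfConnectedFree (show ActionCategory G X from x)) _ _ ?_
  exact
    { toFun g := ⟨g.1, g.2⟩
      invFun g := ⟨g.1, g.2⟩
      map_mul' _ _ := rfl }

variable {G Y X : Type*} [Group G] [MulAction G Y] [Group X]

@[simps]
def coboundaryHom (t : Y → X) : G →* (Y → X) ⋊[mulAutArrow] G where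
  toFun g := ⟨fun y => t y * (t (g⁻¹ • y))⁻¹, g⟩
  map_one' := by ext <;> simp
  map_mul' g h := by
    ext y
    · show t y * (t ((g * h)⁻¹ • y))⁻¹ =
        t y * (t (g⁻¹ • y))⁻¹ * (t (g⁻¹ • y) * (t (h⁻¹ • g⁻¹ • y))⁻¹)
      simp [mul_smul, mul_assoc]
    · rfl

theorem map_eq_curry_left (F : ActionCategory G Y ⥤ SingleObj X) {p q : ActionCategory G Y}
    (f : p ⟶ q) : F.map f = (curry F f.val).left q.back := by
  cases f using ActionCategory.cases
  rfl

theorem eq_uncurry_of_curry_eq {F : ActionCategory G Y ⥤ SingleObj X}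
    {φ : G →* (Y → X) ⋊[mulAutArrow] G} (sane : ∀ g, (φ g).right = g) (h : curry F = φ) :
    F = uncurry φ sane := by
  apply Functor.hext
  · intro
    apply Unit.ext
  · intro p q f
    rw [map_eq_curry_left F f, h]
    rfl

end CategoryTheory.ActionCategory

namespace Monoid.Coprod

variable {A B : Type*} [Group A] [Group B]

variable (A B) in
abbrev toProdAction : MulAction (Coprod A B) (A × B) := MulAction.compHom _ toProd

attribute [local instance] toProdAction

theorem toProd_smul (g : Coprod A B) (x : A × B) : g • x = toProd g * x := rfl

theorem inl_smul (a : A) (x : A × B) : (inl a : Coprod A B) • x = (a * x.1, x.2) := by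
  simp [toProd_smul, Prod.mul_def]

theorem inr_smul (b : B) (x : A × B) : (inr b : Coprod A B) • x = (x.1, b * x.2) := by
  simp [toProd_smul, Prod.mul_def]

instance : MulAction.IsPretransitive (Coprod A B) (A × B) :=
  ⟨fun x y => ⟨inl (y.1 * x.1⁻¹) * inr (y.2 * x.2⁻¹), by simp [toProd_smul, Prod.mul_def]⟩⟩

theorem stabilizer_one_eq_ker : MulAction.stabilizer (Coprod A B) (1 : A × B) = toProd.ker := by
  ext g
  simp [MulAction.mem_stabilizer_iff, toProd_smul]

def Generator (p q : ActionCategory (Coprod A B) (A × B)) : Type _ :=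
  {a : A // a ≠ 1 ∧ p.back.1 = 1 ∧ q.back = (a, p.back.2)} ⊕
  {b : B // b ≠ 1 ∧ p.back.2 = 1 ∧ q.back = (p.back.1, b)}

def Generator.toHom {p q : ActionCategory (Coprod A B) (A × B)} : Generator p q → (p ⟶ q)
  | .inl ⟨a, _, hp, hq⟩ => ⟨inl a, show inl a • p.back = q.back by rw [inl_smul, hp, mul_one, hq]⟩
  | .inr ⟨b, _, hp, hq⟩ => ⟨inr b, show inr b • p.back = q.back by rw [inr_smul, hp, mul_one, hq]⟩

variable {X : Type*} [Group X]

theorem comp_inl_eq_coboundaryHom (c : Coprod A B →* (A × B → X) ⋊[mulAutArrow] Coprod A B)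
    (hc : ∀ g, (c g).right = g) :
    c.comp inl = (coboundaryHom fun x => (c (inl x.1)).left x).comp inl := by
  ext a : 1
  refine SemidirectProduct.ext (funext fun x => ?_) (hc _)
  have key : (c (inl x.1)).left x =
      (c (inl a)).left x * (c (inl (a⁻¹ * x.1))).left (a⁻¹ * x.1, x.2) := by
    rw [show (inl x.1 : Coprod A B) = inl a * inl (a⁻¹ * x.1) by simp, map_mul,
      SemidirectProduct.mul_left, hc, Pi.mul_apply, mulAutArrow_apply_apply]
    change _ * (c _).left ((inl a : Coprod A B)⁻¹ • x) = _
    rw [← map_inv, inl_smul]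
  rw [MonoidHom.comp_apply, MonoidHom.comp_apply, coboundaryHom_apply_left, ← map_inv, inl_smul,
    key, mul_inv_cancel_right]

theorem comp_inr_eq_coboundaryHom (c : Coprod A B →* (A × B → X) ⋊[mulAutArrow] Coprod A B)
    (hc : ∀ g, (c g).right = g) :
    c.comp inr = (coboundaryHom fun x => (c (inr x.2)).left x).comp inr := by
  ext b : 1
  refine SemidirectProduct.ext (funext fun x => ?_) (hc _)
  have key : (c (inr x.2)).left x =
      (c (inr b)).left x * (c (inr (b⁻¹ * x.2))).left (x.1, b⁻¹ * x.2) := by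
    rw [show (inr x.2 : Coprod A B) = inr b * inr (b⁻¹ * x.2) by simp, map_mul,
      SemidirectProduct.mul_left, hc, Pi.mul_apply, mulAutArrow_apply_apply]
    change _ * (c _).left ((inr b : Coprod A B)⁻¹ • x) = _
    rw [← map_inv, inr_smul]
  rw [MonoidHom.comp_apply, MonoidHom.comp_apply, coboundaryHom_apply_left, ← map_inv, inr_smul,
    key, mul_inv_cancel_right]

section Lift

variable (f : ∀ ⦃p q : ActionCategory (Coprod A B) (A × B)⦄, Generator p q → X)

/- The potential at `x` is the label of the generator `(1, x.2) ⟶ x`, and `1` when `x.1 = 1`,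
where that arrow would be an identity. -/
open scoped Classical in
noncomputable def potentialA (x : A × B) : X :=
  if h : x.1 = 1 then 1 else f (p := ((1, x.2) : A × B)) (q := x) (.inl ⟨x.1, h, rfl, rfl⟩)

open scoped Classical in
noncomputable def potentialB (x : A × B) : X :=
  if h : x.2 = 1 then 1 else f (p := ((x.1, 1) : A × B)) (q := x) (.inr ⟨x.2, h, rfl, rfl⟩)

noncomputable def liftHom : Coprod A B →* (A × B → X) ⋊[mulAutArrow] Coprod A B :=
  lift ((coboundaryHom (potentialA f)).comp inl) ((coboundaryHom (potentialB f)).comp inr)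

theorem liftHom_right (g : Coprod A B) : (liftHom f g).right = g := by
  induction g using Coprod.induction_on with
  | inl a => rfl
  | inr b => rfl
  | mul g h hg hh => rw [map_mul, SemidirectProduct.mul_right, hg, hh]

theorem uncurry_liftHom_map_toHom {p q : ActionCategory (Coprod A B) (A × B)} (e : Generator p q) :
    (uncurry (liftHom f) (liftHom_right f)).map e.toHom = f e := by
  obtain ⟨⟨⟩, p1, p2⟩ := p
  obtain ⟨⟨⟩, q1, q2⟩ := q
  rcases e with ⟨a, ha, h1, h2⟩ | ⟨b, hb, h1, h2⟩
  · obtain rfl : p1 = 1 := h1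
    obtain ⟨rfl, rfl⟩ : q1 = a ∧ q2 = p2 := Prod.mk.injEq .. ▸ h2
    show potentialA f (q1, q2) * (potentialA f ((inl q1)⁻¹ • (q1, q2)))⁻¹ = _
    simp [potentialA, ha, ← map_inv, inl_smul]
  · obtain rfl : p2 = 1 := h1
    obtain ⟨rfl, rfl⟩ : q1 = p1 ∧ q2 = b := Prod.mk.injEq .. ▸ h2
    show potentialB f (q1, q2) * (potentialB f ((inr q2)⁻¹ • (q1, q2)))⁻¹ = _
    simp [potentialB, hb, ← map_inv, inr_smul]

variable {f} {E : ActionCategory (Coprod A B) (A × B) ⥤ SingleObj X}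

theorem curry_inl_left_eq_potentialA (hE : ∀ p q (e : Generator p q), E.map e.toHom = f e) :
    (fun x => (curry E (inl x.1)).left x) = potentialA f := by
  funext ⟨a, b⟩
  by_cases ha : a = 1
  · subst ha
    simp [potentialA]
  · rw [potentialA, dif_neg ha]
    exact (map_eq_curry_left E (Generator.toHom (p := ((1, b) : A × B)) (q := ((a, b) : A × B))
      (.inl ⟨a, ha, rfl, rfl⟩))).symm.trans (hE _ _ _)

theorem curry_inr_left_eq_potentialB (hE : ∀ p q (e : Generator p q), E.map e.toHom = f e) :
    (fun x => (curry E (inr x.2)).left x) = potentialB f := by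
  funext ⟨a, b⟩
  by_cases hb : b = 1
  · subst hb
    simp [potentialB]
  · rw [potentialB, dif_neg hb]
    exact (map_eq_curry_left E (Generator.toHom (p := ((a, 1) : A × B)) (q := ((a, b) : A × B))
      (.inr ⟨b, hb, rfl, rfl⟩))).symm.trans (hE _ _ _)

theorem curry_eq_liftHom (hE : ∀ p q (e : Generator p q), E.map e.toHom = f e) :
    curry E = liftHom f := by
  have hc : ∀ g, (curry E g).right = g := fun _ => rfl
  apply hom_ext
  · rw [comp_inl_eq_coboundaryHom _ hc, curry_inl_left_eq_potentialA hE]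
    rfl
  · rw [comp_inr_eq_coboundaryHom _ hc, curry_inr_left_eq_potentialB hE]
    rfl

end Lift

instance : IsFreeGroupoid (ActionCategory (Coprod A B) (A × B)) where
  quiverGenerators := ⟨Generator⟩
  of := Generator.toHom
  unique_lift f :=
    ⟨uncurry (liftHom f) (liftHom_right f), fun _ _ => uncurry_liftHom_map_toHom f,
      fun _ hE => eq_uncurry_of_curry_eq _ (curry_eq_liftHom hE)⟩

end Monoid.Coprod

/-- The kernel of the natural homomorphism `A * B → A × B` from the free product
to the direct product is a free group. -/
theorem stmt_2 (A B : Type*) [Group A] [Group B] :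
    IsFreeGroup (Coprod.toProd : Coprod A B →* A × B).ker := by
  let _ := Coprod.toProdAction A B
  rw [← Coprod.stabilizer_one_eq_ker]
  exact ActionCategory.isFreeGroup_stabilizer _
end

section
/- If A and B are nontrivial groups and A has order greater than 2, then the kernel of the natural map A * B → A × B is a nonabelian group. -/
open Monoid

namespace Stmt4Aux

universe u v

variable (A : Type u) (B : Type v) [Group A] [Group B]

abbrev G : Bool → Type (max u v) := fun b => cond b (ULift.{v} A) (ULift.{u} B)

instance (b : Bool) : Group (G A B b) :=
  b.rec (inferInstanceAs (Group (ULift B))) (inferInstanceAs (Group (ULift A)))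

noncomputable def φ : Coprod A B →* CoprodI (G A B) :=
  Coprod.lift
    ((CoprodI.of (i := true)).comp (MulEquiv.ulift (α := A)).symm.toMonoidHom)
    ((CoprodI.of (i := false)).comp (MulEquiv.ulift (α := B)).symm.toMonoidHom)

noncomputable def ψ : CoprodI (G A B) →* Coprod A B :=
  CoprodI.lift (fun b => b.rec
    ((Coprod.inr : B →* Coprod A B).comp (MulEquiv.ulift (α := B)).toMonoidHom)
    ((Coprod.inl : A →* Coprod A B).comp (MulEquiv.ulift (α := A)).toMonoidHom))

theorem φ_injective : Function.Injective (φ A B) := by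
  have h : (ψ A B).comp (φ A B) = MonoidHom.id _ := by
    apply Coprod.hom_ext <;> ext x <;> simp only [MonoidHom.comp_apply, MonoidHom.id_apply, φ,
      Coprod.lift_apply_inl, Coprod.lift_apply_inr, ψ, CoprodI.lift_of] <;> rfl
  intro x y hxy
  have hx := DFunLike.congr_fun h x
  have hy := DFunLike.congr_fun h y
  simp only [MonoidHom.comp_apply, MonoidHom.id_apply] at hx hy
  rw [← hx, ← hy, hxy]

theorem φ_inl (a : A) : φ A B (Coprod.inl a) = CoprodI.of (M := G A B) (i := true) (ULift.up a) := rfl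
theorem φ_inr (b : B) : φ A B (Coprod.inr b) = CoprodI.of (M := G A B) (i := false) (ULift.up b) := rfl

variable {A B}

/-- The reduced word corresponding to `[x,b] * [y,b]`. -/
def comWord (x y : A) (b : B) (hx : x ≠ 1) (hy : y ≠ 1) (hb : b ≠ 1) :
    CoprodI.Word (G A B) where
  toList :=
    [⟨true, ULift.up x⟩, ⟨false, ULift.up b⟩, ⟨true, ULift.up x⁻¹⟩, ⟨false, ULift.up b⁻¹⟩,
     ⟨true, ULift.up y⟩, ⟨false, ULift.up b⟩, ⟨true, ULift.up y⁻¹⟩, ⟨false, ULift.up b⁻¹⟩]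
  ne_one := by
    simp only [List.mem_cons, List.not_mem_nil, or_false]
    rintro l (rfl | rfl | rfl | rfl | rfl | rfl | rfl | rfl) <;>
      simp [ULift.ext_iff, hx, hy, hb, inv_ne_one.2 hx, inv_ne_one.2 hy, inv_ne_one.2 hb]
  chain_ne := by simp [List.isChain_cons_cons]

theorem comWord_prod (x y : A) (b : B) (hx : x ≠ 1) (hy : y ≠ 1) (hb : b ≠ 1) :
    (comWord x y b hx hy hb).prod =
      φ A B ((Coprod.inl x * Coprod.inr b * (Coprod.inl x)⁻¹ * (Coprod.inr b)⁻¹) *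
        (Coprod.inl y * Coprod.inr b * (Coprod.inl y)⁻¹ * (Coprod.inr b)⁻¹)) := by
  simp only [map_mul, map_inv, φ_inl, φ_inr]
  simp only [CoprodI.Word.prod, comWord, List.map_cons, List.map_nil, List.prod_cons,
    List.prod_nil, mul_one]
  simp only [show ∀ z : A, (ULift.up z⁻¹ : ULift.{v} A) = (ULift.up z)⁻¹ from fun _ => rfl,
    show ∀ w : B, (ULift.up w⁻¹ : ULift.{u} B) = (ULift.up w)⁻¹ from fun _ => rfl,
    map_inv, mul_assoc]

end Stmt4Aux

/-- If `A` and `B` are nontrivial groups and `A` has order greater than `2`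
(i.e. `A` contains two distinct nontrivial elements), then the kernel of the
natural map `A * B → A × B` is nonabelian. -/
theorem stmt_4 (A B : Type*) [Group A] [Group B] [Nontrivial B]
    (hA : ∃ a a' : A, a ≠ a' ∧ a ≠ 1 ∧ a' ≠ 1) :
    ¬ ∀ x y : (Coprod.toProd : Coprod A B →* A × B).ker, x * y = y * x := by
  classical
  obtain ⟨a, a', haa', ha, ha'⟩ := hA
  obtain ⟨b, hb⟩ := exists_ne (1 : B)
  set g : Coprod A B := Coprod.inl a * Coprod.inr b * (Coprod.inl a)⁻¹ * (Coprod.inr b)⁻¹ with hg_def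
  set g' : Coprod A B := Coprod.inl a' * Coprod.inr b * (Coprod.inl a')⁻¹ * (Coprod.inr b)⁻¹ with hg'_def
  have hg : g ∈ (Coprod.toProd : Coprod A B →* A × B).ker := by
    simp [hg_def, MonoidHom.mem_ker, Coprod.toProd_apply_inl, Coprod.toProd_apply_inr,
      Prod.ext_iff, mul_assoc]
  have hg' : g' ∈ (Coprod.toProd : Coprod A B →* A × B).ker := by
    simp [hg'_def, MonoidHom.mem_ker, Coprod.toProd_apply_inl, Coprod.toProd_apply_inr,
      Prod.ext_iff, mul_assoc]
  intro h
  have hcomm : g * g' = g' * g := congrArg Subtype.val (h ⟨g, hg⟩ ⟨g', hg'⟩)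
  have hφ : Stmt4Aux.φ A B (g * g') = Stmt4Aux.φ A B (g' * g) := congrArg _ hcomm
  have hinj : Function.Injective (CoprodI.Word.prod (M := Stmt4Aux.G A B)) :=
    (CoprodI.Word.equiv (M := Stmt4Aux.G A B)).symm.injective
  have hw : Stmt4Aux.comWord a a' b ha ha' hb = Stmt4Aux.comWord a' a b ha' ha hb := by
    apply hinj
    rw [Stmt4Aux.comWord_prod, Stmt4Aux.comWord_prod]
    exact hφ
  have hlist := congrArg CoprodI.Word.toList hw
  simp only [Stmt4Aux.comWord, List.cons.injEq, Sigma.ext_iff, heq_eq_eq, true_and,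
    and_true] at hlist
  exact haa' (by simpa [ULift.ext_iff] using hlist.1)
end

section
/- Every finite subgroup of GL(3, ℤ) is solvable. -/
/-!
Minkowski's argument. Let `p` be an odd prime. If `A ∈ GL_n(ℤ)` has prime order `q` and
`A = 1 + p^k C` with `k ≥ 1`, expanding `(1 + p^k C)^q = 1` shows `p ∣ C`; hence `A ≡ 1` modulo
every power of `p`, so `A = 1`. Thus reduction modulo `p` is injective on torsion, and a finite
`H ≤ GL₃(ℤ)` has order dividing both `|GL₃(𝔽₃)| = 2^5·3^3·13` and `|GL₃(𝔽₅)| = 2^7·3·5^3·31`,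
hence dividing `96 = 2^5·3`. In such a group a Sylow `2`-subgroup has index `1` or `3`, and the
action on its cosets maps the group to `S₃` with kernel a `2`-group, so the group is solvable.
-/

theorem prime_mul_sq_dvd_one_add_pow_prime_sub {R : Type*} [CommRing R] {p : ℕ} (hp : p.Prime)
    (y : R) : (p : R) * y ^ 2 ∣ (1 + y) ^ p - 1 - p * y - y ^ p := by
  obtain ⟨r, rfl⟩ : ∃ r, p = r + 2 := ⟨p - 2, by have := hp.two_le; omega⟩
  rw [add_comm 1 y, add_pow, Finset.sum_range_succ, Finset.sum_range_succ', Finset.sum_range_succ']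
  have hmiddle : ∀ m ∈ Finset.range r, ((r + 2 : ℕ) : R) * y ^ 2 ∣
      y ^ (m + 1 + 1) * 1 ^ (r + 2 - (m + 1 + 1)) * ((r + 2).choose (m + 1 + 1) : ℕ) := by
    intro m hm
    obtain ⟨c, hc⟩ := hp.dvd_choose_self (k := m + 1 + 1) (by omega) (by simp at hm; omega)
    exact ⟨y ^ m * c, by rw [hc]; push_cast; ring⟩
  convert Finset.dvd_sum hmiddle using 1
  simp only [Nat.reduceSubDiff, one_pow, mul_one, zero_add, pow_one, Nat.add_one_sub_one,
    Nat.choose_one_right, Nat.cast_add, Nat.cast_ofNat, pow_zero, tsub_zero, Nat.choose_zero_right,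
    Nat.cast_one, tsub_self, Nat.choose_self]
  ring

section OneAddPow

open Polynomial

variable {R : Type*} [Ring R]

theorem exists_one_add_pow_sub_sub_eq_sq_mul (y : R) (q : ℕ) :
    ∃ s, (1 + y) ^ q - 1 - q * y = y ^ 2 * s := by
  obtain ⟨S, hS⟩ := sq_dvd_add_pow_sub_sub (X : ℤ[X]) 1 q
  refine ⟨aeval y S, ?_⟩
  have := congrArg (aeval y) hS
  simp only [map_sub, map_mul, map_pow, map_add, map_one, map_natCast, aeval_X, one_pow,
    one_mul] at this
  rw [← this, Nat.cast_comm]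
  abel

theorem exists_one_add_pow_prime_sub_eq_mul_sq_mul {p : ℕ} (hp : p.Prime) (y : R) :
    ∃ s, (1 + y) ^ p - 1 - p * y - y ^ p = p * y ^ 2 * s := by
  obtain ⟨S, hS⟩ := prime_mul_sq_dvd_one_add_pow_prime_sub hp (X : ℤ[X])
  refine ⟨aeval y S, ?_⟩
  simpa only [map_sub, map_mul, map_pow, map_add, map_one, map_natCast, aeval_X] using
    congrArg (aeval y) hS

end OneAddPow

theorem exists_eq_nsmul_of_coprime {M : Type*} [AddCommGroup M] {p q : ℕ} (hqp : q.Coprime p)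
    {c d : M} (h : q • c = p • d) : ∃ e, c = p • e := by
  obtain ⟨a, b, hab⟩ := Nat.isCoprime_iff_coprime.mpr hqp
  refine ⟨a • d + b • c, ?_⟩
  calc c = (a * q + b * p : ℤ) • c := by rw [hab, one_smul]
    _ = p • (a • d + b • c) := by
      rw [add_smul, mul_smul, mul_smul, natCast_zsmul, natCast_zsmul, h]
      module

instance Matrix.instIsAddTorsionFree {m n α : Type*} [AddMonoid α] [IsAddTorsionFree α] :
    IsAddTorsionFree (Matrix m n α) :=
  Pi.instIsAddTorsionFree

section TorsionFreeRing

variable {R : Type*} [Ring R] [IsAddTorsionFree R]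

/- For `q ≠ p` the linear term `q p^k c` of `(1 + p^k c)^q - 1` is divisible by `p^(2k)`.
For `q = p` the linear term is `p^(k+1) c`, while the other terms are divisible by `p^(k+2)`:
the middle binomial coefficients carry a factor `p`, and `p^(kp)` does because `p ≥ 3`. -/
theorem exists_eq_nsmul_of_one_add_pow_prime_eq_one {p q k : ℕ} (hp : p.Prime) (hp2 : p ≠ 2)
    (hq : q.Prime) (hk : k ≠ 0) {c : R} (h : (1 + p ^ k • c) ^ q = 1) : ∃ d, c = p • d := by
  obtain ⟨j, rfl⟩ := Nat.exists_eq_add_one_of_ne_zero hk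
  obtain rfl | hpq := eq_or_ne p q
  · obtain ⟨s, hs⟩ := exists_one_add_pow_prime_sub_eq_mul_sq_mul hp (p ^ (j + 1) • c)
    obtain ⟨e, he⟩ : ∃ e, (j + 1) * p = j + 2 + (e + 1) :=
      ⟨(j + 1) * p - (j + 3), by
        have := Nat.mul_le_mul_left (j + 1) (show 3 ≤ p by have := hp.two_le; omega)
        omega⟩
    have key : p ^ (j + 2) • (c + p ^ (e + 1) • c ^ p + p ^ (j + 1) • (c ^ 2 * s)) = 0 := by
      rw [h, smul_pow, ← pow_mul, he] at hs
      simp only [← nsmul_eq_mul, smul_pow, smul_mul_assoc] at hs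
      linear_combination (norm := module) -hs
    rw [nsmul_eq_zero_iff_right (pow_ne_zero _ hp.ne_zero)] at key
    exact ⟨-(p ^ e • c ^ p + p ^ j • (c ^ 2 * s)), by linear_combination (norm := module) key⟩
  · obtain ⟨s, hs⟩ := exists_one_add_pow_sub_sub_eq_sq_mul (p ^ (j + 1) • c) q
    have key : p ^ (j + 1) • (q • c + p ^ (j + 1) • (c ^ 2 * s)) = 0 := by
      rw [h, smul_pow] at hs
      simp only [← nsmul_eq_mul, smul_mul_assoc] at hs
      linear_combination (norm := module) -hs
    rw [nsmul_eq_zero_iff_right (pow_ne_zero _ hp.ne_zero)] at key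
    refine exists_eq_nsmul_of_coprime ((Nat.coprime_primes hq hp).mpr hpq.symm)
      (d := -(p ^ j • (c ^ 2 * s))) ?_
    linear_combination (norm := module) key

theorem exists_sub_one_eq_pow_nsmul_of_pow_prime_eq_one {p q : ℕ} (hp : p.Prime) (hp2 : p ≠ 2)
    (hq : q.Prime) {a : R} (ha : a ^ q = 1) (h : ∃ c, a - 1 = p • c) :
    ∀ k, ∃ c, a - 1 = p ^ (k + 1) • c
  | 0 => by simpa using h
  | k + 1 => by
    obtain ⟨c, hc⟩ := exists_sub_one_eq_pow_nsmul_of_pow_prime_eq_one hp hp2 hq ha h k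
    obtain ⟨d, rfl⟩ := exists_eq_nsmul_of_one_add_pow_prime_eq_one hp hp2 hq k.succ_ne_zero
      (by rwa [← hc, add_sub_cancel])
    exact ⟨d, by rw [hc, ← mul_smul, ← pow_succ]⟩

end TorsionFreeRing

theorem Matrix.eq_zero_of_forall_exists_eq_pow_nsmul {m n : Type*} {p : ℕ} (hp : p ≠ 1)
    {B : Matrix m n ℤ} (h : ∀ k, ∃ C, B = p ^ (k + 1) • C) : B = 0 := by
  ext i j
  by_contra hne
  obtain ⟨k, hk⟩ := Int.finiteMultiplicity_iff.mpr ⟨(Int.natAbs_natCast p).trans_ne hp, hne⟩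
  obtain ⟨C, rfl⟩ := h k
  exact hk ⟨C i j, by simp⟩

theorem IsOfFinOrder.eq_one_of_forall_pow_prime {G : Type*} [Group G] {a : G}
    (ha : IsOfFinOrder a) (h : ∀ k q : ℕ, q.Prime → (a ^ k) ^ q = 1 → a ^ k = 1) : a = 1 := by
  by_contra hne
  have hq : (orderOf a).minFac.Prime := Nat.minFac_prime (by rwa [Ne, orderOf_eq_one_iff])
  have hord := orderOf_pow_orderOf_div ha.orderOf_pos.ne' (Nat.minFac_dvd (orderOf a))
  have := h _ _ hq (hord ▸ pow_orderOf_eq_one _)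
  rw [← orderOf_eq_one_iff, hord] at this
  exact hq.one_lt.ne' this

namespace Matrix.GeneralLinearGroup

variable {n : Type*} [Fintype n] [DecidableEq n]

theorem exists_sub_one_eq_nsmul_of_map_eq_one {p : ℕ} {a : GL n ℤ}
    (h : map (Int.castRingHom (ZMod p)) a = 1) : ∃ c, (a : Matrix n n ℤ) - 1 = p • c := by
  have hdvd (i j : n) : (p : ℤ) ∣ ((a : Matrix n n ℤ) - 1) i j := by
    have := congrArg (fun g : GL n (ZMod p) ↦ (g : Matrix n n (ZMod p)) i j) h
    simp only [GeneralLinearGroup.map_apply, eq_intCast, Units.val_one] at this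
    rw [← ZMod.intCast_zmod_eq_zero_iff_dvd, sub_apply, Int.cast_sub, this]
    by_cases hij : i = j <;> simp [one_apply, hij]
  exact ⟨Matrix.of fun i j ↦ ((a : Matrix n n ℤ) - 1) i j / p, by
    ext i j; exact (Int.mul_ediv_cancel' (hdvd i j)).symm⟩

theorem eq_one_of_isOfFinOrder_of_map_eq_one {p : ℕ} [hp : Fact p.Prime] (hp2 : p ≠ 2)
    {a : GL n ℤ} (ha : IsOfFinOrder a) (h : map (Int.castRingHom (ZMod p)) a = 1) : a = 1 := by
  refine ha.eq_one_of_forall_pow_prime fun k q hq hpow ↦ Units.ext <| sub_eq_zero.mp ?_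
  have hk : map (Int.castRingHom (ZMod p)) (a ^ k) = 1 := by rw [map_pow, h, one_pow]
  exact Matrix.eq_zero_of_forall_exists_eq_pow_nsmul hp.out.ne_one <|
    exists_sub_one_eq_pow_nsmul_of_pow_prime_eq_one hp.out hp2 hq
      (by simpa using congrArg Units.val hpow) (exists_sub_one_eq_nsmul_of_map_eq_one hk)

theorem card_subgroup_dvd_card_GL_zmod (H : Subgroup (GL n ℤ)) [Finite H] {p : ℕ} [Fact p.Prime]
    (hp2 : p ≠ 2) : Nat.card H ∣ Nat.card (GL n (ZMod p)) := by
  refine Subgroup.card_dvd_of_injective ((map (Int.castRingHom (ZMod p))).comp H.subtype) ?_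
  rw [injective_iff_map_eq_one]
  exact fun x hx ↦ Subtype.ext <|
    eq_one_of_isOfFinOrder_of_map_eq_one hp2 (H.subtype.isOfFinOrder (isOfFinOrder_of_finite x)) hx

end Matrix.GeneralLinearGroup

theorem isSolvable_of_isSolvable_perm_quotient {G : Type*} [Group G] (H : Subgroup G)
    [Group.IsSolvable H] [Group.IsSolvable (Equiv.Perm (G ⧸ H))] : Group.IsSolvable G := by
  let φ := MulAction.toPermHom G (G ⧸ H)
  have hle : φ.ker ≤ H := H.normalCore_eq_ker ▸ H.normalCore_le
  have : Group.IsSolvable φ.ker :=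
    Group.isSolvable_of_isSolvable_injective (Subgroup.inclusion_injective hle)
  exact Group.isSolvable_of_ker_le_range φ.ker.subtype φ φ.ker.range_subtype.ge

theorem Equiv.Perm.isSolvable_of_card_eq_three {X : Type*} [Finite X] (hX : Nat.card X = 3) :
    Group.IsSolvable (Equiv.Perm X) := by
  classical
  have : Fintype X := Fintype.ofFinite X
  have : Nontrivial X := Finite.one_lt_card_iff_nontrivial.mp (by omega)
  have : Fact (Nat.Prime 3) := ⟨Nat.prime_three⟩
  have : IsCyclic (alternatingGroup X) := by
    refine isCyclic_of_prime_card (p := 3) ?_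
    have := two_mul_nat_card_alternatingGroup (α := X)
    rw [Nat.card_perm, hX, Nat.factorial_succ, Nat.factorial_two] at this
    omega
  exact Group.isSolvable_of_ker_le_range (alternatingGroup X).subtype Equiv.Perm.sign
    (alternatingGroup X).range_subtype.ge

theorem isSolvable_of_card_dvd_two_pow_mul_three {G : Type*} [Group G] {a : ℕ}
    (h : Nat.card G ∣ 2 ^ a * 3) : Group.IsSolvable G := by
  have : Finite G := Nat.finite_of_card_ne_zero (ne_zero_of_dvd_ne_zero (by positivity) h)
  have : Fact (Nat.Prime 2) := ⟨Nat.prime_two⟩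
  obtain ⟨P⟩ : Nonempty (Sylow 2 G) := inferInstance
  have := P.isPGroup'.isNilpotent
  have hindex : Nat.card (G ⧸ (P : Subgroup G)) ∣ 3 :=
    (Nat.Coprime.pow_right a ((Nat.Prime.coprime_iff_not_dvd Nat.prime_two).mpr
      P.not_dvd_index).symm).dvd_of_dvd_mul_left ((Subgroup.index_dvd_card _).trans h)
  have : Group.IsSolvable (Equiv.Perm (G ⧸ (P : Subgroup G))) := by
    rcases (Nat.dvd_prime Nat.prime_three).mp hindex with h1 | h3
    · have := (Nat.card_eq_one_iff_unique.mp h1).1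
      infer_instance
    · exact Equiv.Perm.isSolvable_of_card_eq_three h3
  exact isSolvable_of_isSolvable_perm_quotient (P : Subgroup G)

/-- Every finite subgroup of `GL(3, ℤ)` is solvable. -/
theorem stmt_8 (H : Subgroup (Matrix.GeneralLinearGroup (Fin 3) ℤ)) (hH : Finite H) :
    IsSolvable H := by
  have : Fact (Nat.Prime 5) := ⟨by norm_num⟩
  have h3 := Matrix.GeneralLinearGroup.card_subgroup_dvd_card_GL_zmod H (p := 3) (by norm_num)
  have h5 := Matrix.GeneralLinearGroup.card_subgroup_dvd_card_GL_zmod H (p := 5) (by norm_num)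
  simp only [Matrix.card_GL_field, ZMod.card, Fin.prod_univ_three] at h3 h5
  exact isSolvable_of_card_dvd_two_pow_mul_three (a := 5) (by simpa using Nat.dvd_gcd h3 h5)
end

section
/- Any torsion-free group which is virtually torsion-free abelian of rank 1 (i.e. has a finite-index subgroup isomorphic to a subgroup of ℚ) is itself abelian. -/
open scoped commutatorElement

/-- Any torsion-free group which is virtually torsion-free abelian of rank 1
(i.e. has a finite-index subgroup isomorphic to a subgroup of `ℚ`) is itself
abelian. -/
theorem stmt_10 (G : Type*) [Group G]
    (htf : ∀ g : G, g ≠ 1 → ¬IsOfFinOrder g)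
    (hvr1 : ∃ H : Subgroup G, H.index ≠ 0 ∧
      ∃ f : H →* Multiplicative ℚ, Function.Injective f) :
    ∀ x y : G, x * y = y * x := by
  obtain ⟨H, hHidx, f, hf⟩ := hvr1
  haveI : H.FiniteIndex := ⟨hHidx⟩
  set K := H.normalCore with hKdef
  haveI hKn : K.Normal := H.normalCore_normal
  haveI hKfi : K.FiniteIndex := H.finiteIndex_normalCore
  let ψ : K →* Multiplicative ℚ := f.comp (Subgroup.inclusion H.normalCore_le)
  have hψ : Function.Injective ψ :=
    hf.comp (Subgroup.inclusion_injective H.normalCore_le)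
  let φ : K → ℚ := fun k => Multiplicative.toAdd (ψ k)
  have hφinj : Function.Injective φ := fun a b h => hψ (by simpa [φ] using h)
  have hφzpow : ∀ (k : K) (s : ℤ), φ (k ^ s) = s * φ k := by
    intro k s
    simp [φ, map_zpow, toAdd_zpow, zsmul_eq_mul]
  have hφone : φ 1 = 0 := by simp [φ]
  -- conjugation map
  let c : G → K → K := fun g k => ⟨g * (k : G) * g⁻¹, hKn.conj_mem k.1 k.2 g⟩
  have hc_zpow : ∀ (g : G) (k : K) (s : ℤ), c g (k ^ s) = (c g k) ^ s := by
    intro g k s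
    ext
    show g * ((k : G) ^ s) * g⁻¹ = (g * (k : G) * g⁻¹) ^ s
    rw [conj_zpow]
  -- linearity of conjugation over the rationals
  have hlin : ∀ (g : G) (k₁ k₂ : K), φ k₂ * φ (c g k₁) = φ k₁ * φ (c g k₂) := by
    intro g k₁ k₂
    set a := φ k₁ with ha
    set b := φ k₂ with hb
    have hae : a * (a.den : ℚ) = a.num := Rat.mul_den_eq_num a
    have hbe : b * (b.den : ℚ) = b.num := Rat.mul_den_eq_num b
    set s : ℤ := b.num * a.den with hs
    set t : ℤ := a.num * b.den with ht
    have hst : (s : ℚ) * a = (t : ℚ) * b := by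
      push_cast [hs, ht]
      linear_combination (b.num : ℚ) * hae - (a.num : ℚ) * hbe
    have hkey : k₁ ^ s = k₂ ^ t := by
      apply hφinj
      rw [hφzpow, hφzpow, ← ha, ← hb, hst]
    have h2 : (s : ℚ) * φ (c g k₁) = (t : ℚ) * φ (c g k₂) := by
      have := congrArg (fun k => φ (c g k)) hkey
      simpa [hc_zpow, hφzpow] using this
    have h1 : (a.den : ℚ) ≠ 0 := by exact_mod_cast a.den_nz
    have h2' : (b.den : ℚ) ≠ 0 := by exact_mod_cast b.den_nz
    have hbX : b * φ (c g k₁) * ((a.den : ℚ) * b.den)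
        = a * φ (c g k₂) * ((a.den : ℚ) * b.den) := by
      push_cast [hs, ht] at h2
      linear_combination ((a.den : ℚ) * φ (c g k₁)) * hbe
        - ((b.den : ℚ) * φ (c g k₂)) * hae + h2
    exact mul_right_cancel₀ (mul_ne_zero h1 h2') hbX
  -- K is central
  have hcentral : ∀ (g : G) (k : K), g * (k : G) * g⁻¹ = (k : G) := by
    intro g k
    by_cases hg1 : g = 1
    · simp [hg1]
    have hn : K.index ≠ 0 := hKfi.index_ne_zero
    set k₀ : K := ⟨g ^ K.index, K.pow_index_mem g⟩ with hk₀
    have hck₀ : c g k₀ = k₀ := by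
      ext
      show g * g ^ K.index * g⁻¹ = g ^ K.index
      group
    have hk₀ne : φ k₀ ≠ 0 := by
      intro h0
      have h1 : k₀ = 1 := hφinj (by rw [h0, hφone])
      have hgn : g ^ K.index = 1 := by simpa [hk₀, Subtype.ext_iff] using h1
      exact htf g hg1 (isOfFinOrder_iff_pow_eq_one.2 ⟨K.index, Nat.pos_of_ne_zero hn, hgn⟩)
    have hl := hlin g k k₀
    rw [hck₀] at hl
    have hφck : φ (c g k) = φ k :=
      mul_left_cancel₀ hk₀ne (by linarith [hl] : φ k₀ * φ (c g k) = φ k₀ * φ k)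
    have : c g k = k := hφinj hφck
    simpa [c, Subtype.ext_iff] using this
  -- K ≤ center
  have hK_le : K ≤ Subgroup.center G := by
    intro k hk
    rw [Subgroup.mem_center_iff]
    intro g
    have h := hcentral g ⟨k, hk⟩
    calc g * k = g * k * g⁻¹ * g := by group
    _ = k * g := by rw [h]
  haveI : (Subgroup.center G).FiniteIndex := Subgroup.finiteIndex_of_le hK_le
  -- transfer argument (Schur)
  intro x y
  have hm : (Subgroup.center G).index ≠ 0 := Subgroup.FiniteIndex.index_ne_zero
  have htr : (MonoidHom.transferCenterPow G) ⁅x, y⁆ = 1 := by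
    rw [map_commutatorElement]
    exact commutatorElement_eq_one_iff_mul_comm.2
      (Subtype.ext (Subgroup.mem_center_iff.1 ((MonoidHom.transferCenterPow G) y).2 _))
  have hpow : ⁅x, y⁆ ^ (Subgroup.center G).index = 1 := by
    rw [← MonoidHom.transferCenterPow_apply (g := ⁅x, y⁆), htr]
    rfl
  have hcomm : ⁅x, y⁆ = 1 := by
    by_contra hne
    exact htf _ hne (isOfFinOrder_iff_pow_eq_one.2
      ⟨_, Nat.pos_of_ne_zero hm, hpow⟩)
  exact commutatorElement_eq_one_iff_mul_comm.1 hcomm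
end

section
/- In any virtually polycyclic group G with no nontrivial finite normal subgroup and positive Hirsch length h(G), there exists a characteristic subgroup A of G with A ≅ ℤ^r for some 1 ≤ r ≤ h(G). -/
/-- A group is *polycyclic* if it has a subnormal series `1 = G₀ ⊴ G₁ ⊴ ⋯ ⊴ Gₙ = G`
with each factor `Gᵢ₊₁/Gᵢ` cyclic (expressed internally: each `Gᵢ` is normal in `Gᵢ₊₁`
and `Gᵢ₊₁` is generated by `Gᵢ` together with one element). -/
def IsPolycyclic (G : Type*) [Group G] : Prop :=
  ∃ (n : ℕ) (s : Fin (n + 1) → Subgroup G),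
    s 0 = ⊥ ∧ s (Fin.last n) = ⊤ ∧
    ∀ i : Fin n,
      s i.castSucc ≤ s i.succ ∧
      (∀ x ∈ s i.succ, ∀ k ∈ s i.castSucc, x * k * x⁻¹ ∈ s i.castSucc) ∧
      ∃ g ∈ s i.succ, s i.succ ≤ s i.castSucc ⊔ Subgroup.zpowers g

/-- A group is *virtually polycyclic* if it has a polycyclic subgroup of finite index. -/
def IsVirtuallyPolycyclic (G : Type*) [Group G] : Prop :=
  ∃ H : Subgroup G, H.index ≠ 0 ∧ IsPolycyclic H

/-- A subnormal series `⊥ = s 0 ⊴ s 1 ⊴ ⋯ ⊴ s n = ⊤` in which each factor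
`s (i+1) / s i` is either finite (and then `r i = 0`) or abelian of torsion-free
rank exactly `r i`.  The Hirsch length of the group is `∑ i, r i`. -/
def HirschChain {G : Type*} [Group G] (n : ℕ) (s : Fin (n + 1) → Subgroup G)
    (r : Fin n → ℕ) : Prop :=
  s 0 = ⊥ ∧ s (Fin.last n) = ⊤ ∧
    ∀ i : Fin n,
      s i.castSucc ≤ s i.succ ∧
      (∀ x ∈ s i.succ, ∀ k ∈ s i.castSucc, x * k * x⁻¹ ∈ s i.castSucc) ∧
      (((s i.castSucc).relIndex (s i.succ) ≠ 0 ∧ r i = 0) ∨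
        ((∀ x ∈ s i.succ, ∀ y ∈ s i.succ, x * y * x⁻¹ * y⁻¹ ∈ s i.castSucc) ∧
          (∀ f : Fin (r i + 1) → G, (∀ j, f j ∈ s i.succ) →
            ∃ c : Fin (r i + 1) → ℤ, c ≠ 0 ∧ ∃ k : ℕ, k ≠ 0 ∧
              ((List.ofFn fun j => f j ^ c j).prod) ^ k ∈ s i.castSucc) ∧
          (∃ f : Fin (r i) → G, (∀ j, f j ∈ s i.succ) ∧
            ∀ c : Fin (r i) → ℤ, ∀ k : ℕ, k ≠ 0 →
              ((List.ofFn fun j => f j ^ c j).prod) ^ k ∈ s i.castSucc → c = 0)))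

/-- A (virtually solvable or virtually polycyclic) group has Hirsch length `h` if it
admits a subnormal series with finite or abelian factors in which the sum of the
torsion-free ranks of the abelian factors is `h`. -/
def HasHirschLength (G : Type*) [Group G] (h : ℕ) : Prop :=
  ∃ (n : ℕ) (s : Fin (n + 1) → Subgroup G) (r : Fin n → ℕ),
    HirschChain n s r ∧ ∑ i, r i = h


section NF
variable {G : Type*} [Group G]

/-- The set of normal forms `p * g ^ k` is a subgroup when `g` normalizes `P`. -/
def nfSubgroup (P : Subgroup G) (Q : Subgroup G) (g : G)
    (hconj : ∀ x ∈ Q, ∀ k ∈ P, x * k * x⁻¹ ∈ P) (hg : g ∈ Q) : Subgroup G where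
  carrier := {x | ∃ p ∈ P, ∃ k : ℤ, x = p * g ^ k}
  one_mem' := ⟨1, P.one_mem, 0, by simp⟩
  mul_mem' := by
    rintro x y ⟨p, hp, a, rfl⟩ ⟨q, hq, b, rfl⟩
    refine ⟨p * (g ^ a * q * (g ^ a)⁻¹), P.mul_mem hp (hconj _ (Q.zpow_mem hg a) _ hq), a + b, ?_⟩
    rw [zpow_add]; group
  inv_mem' := by
    rintro x ⟨p, hp, a, rfl⟩
    refine ⟨(g ^ a)⁻¹ * p⁻¹ * ((g ^ a)⁻¹)⁻¹, hconj _ (Q.inv_mem (Q.zpow_mem hg a)) _ (P.inv_mem hp), -a, ?_⟩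
    rw [zpow_neg]; group

lemma nf_of_mem {P Q : Subgroup G} {g : G}
    (hconj : ∀ x ∈ Q, ∀ k ∈ P, x * k * x⁻¹ ∈ P)
    (hg : g ∈ Q) (hgen : Q ≤ P ⊔ Subgroup.zpowers g) :
    ∀ x ∈ Q, ∃ p ∈ P, ∃ k : ℤ, x = p * g ^ k := by
  intro x hx
  have h1 : Q ≤ nfSubgroup P Q g hconj hg := by
    refine le_trans hgen (sup_le ?_ ?_)
    · intro p hp; exact ⟨p, hp, 0, by simp⟩
    · rintro y hy
      obtain ⟨k, rfl⟩ := Subgroup.mem_zpowers_iff.mp hy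
      exact ⟨1, P.one_mem, k, by simp⟩
  exact h1 hx

end NF

section Poly
variable {G : Type*} [Group G]

lemma nf_mul {P : Subgroup G} {g p q : G} (a b : ℤ)
    (hgP : ∀ c : ℤ, ∀ k ∈ P, g ^ c * k * (g ^ c)⁻¹ ∈ P)
    (hp : p ∈ P) (hq : q ∈ P) :
    ∃ p' ∈ P, (p * g ^ a) * (q * g ^ b) = p' * g ^ (a + b) := by
  refine ⟨p * (g ^ a * q * (g ^ a)⁻¹), P.mul_mem hp (hgP a _ hq), ?_⟩
  rw [zpow_add]; group

lemma nf_inv {P : Subgroup G} {g p : G} (a : ℤ)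
    (hgP : ∀ c : ℤ, ∀ k ∈ P, g ^ c * k * (g ^ c)⁻¹ ∈ P)
    (hp : p ∈ P) :
    ∃ p' ∈ P, (p * g ^ a)⁻¹ = p' * g ^ (-a) := by
  refine ⟨g ^ (-a) * p⁻¹ * (g ^ (-a))⁻¹, hgP (-a) _ (P.inv_mem hp), ?_⟩
  rw [zpow_neg]; group

lemma nf_zpow {P : Subgroup G} {g p : G} (a : ℤ)
    (hgP : ∀ c : ℤ, ∀ k ∈ P, g ^ c * k * (g ^ c)⁻¹ ∈ P)
    (hp : p ∈ P) (m : ℤ) :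
    ∃ q ∈ P, (p * g ^ a) ^ m = q * g ^ (a * m) := by
  induction m using Int.induction_on with
  | zero => exact ⟨1, P.one_mem, by simp⟩
  | succ m ih =>
    obtain ⟨q, hq, hqe⟩ := ih
    obtain ⟨q', hq', heq⟩ := nf_mul (a * m) a hgP hq hp
    refine ⟨q', hq', ?_⟩
    rw [zpow_add, zpow_one, hqe, heq]
    congr 1
    ring
  | pred m ih =>
    obtain ⟨q, hq, hqe⟩ := ih
    obtain ⟨pi, hpi, hpie⟩ := nf_inv a hgP hp
    obtain ⟨q', hq', heq⟩ := nf_mul (a * (-m)) (-a) hgP hq hpi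
    refine ⟨q', hq', ?_⟩
    rw [zpow_sub, zpow_one, hqe, hpie, heq]
    congr 1
    ring

/-- generic chain induction -/
lemma chain_induction {n : ℕ} {s : Fin (n + 1) → Subgroup G} (p : Subgroup G → Prop)
    (h0 : p (s 0)) (hstep : ∀ i : Fin n, p (s i.castSucc) → p (s i.succ)) :
    p (s (Fin.last n)) := by
  have key : ∀ m : ℕ, ∀ hm : m < n + 1, p (s ⟨m, hm⟩) := by
    intro m
    induction m with
    | zero => intro hm; exact h0
    | succ m ih =>
      intro hm
      have hmn : m < n := Nat.lt_of_succ_lt_succ hm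
      have := hstep ⟨m, hmn⟩ (ih (Nat.lt_of_lt_of_le hmn (Nat.le_succ n)))
      simpa [Fin.succ, Fin.castSucc, Fin.castAdd, Fin.castLE] using this
  exact key n (Nat.lt_succ_self n)

lemma step_fg {P Q : Subgroup G} {g : G} (hPQ : P ≤ Q)
    (hconj : ∀ x ∈ Q, ∀ k ∈ P, x * k * x⁻¹ ∈ P)
    (hg : g ∈ Q) (hgen : Q ≤ P ⊔ Subgroup.zpowers g) (K : Subgroup G)
    (hfg : (K ⊓ P).FG) : (K ⊓ Q).FG := by
  have hgP : ∀ c : ℤ, ∀ k ∈ P, g ^ c * k * (g ^ c)⁻¹ ∈ P :=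
    fun c k hk => hconj _ (Q.zpow_mem hg c) _ hk
  have hnf := nf_of_mem hconj hg hgen
  -- the subgroup of exponents
  set Z : AddSubgroup ℤ :=
    { carrier := {k | ∃ x ∈ K ⊓ Q, ∃ p ∈ P, x = p * g ^ k}
      zero_mem' := ⟨1, (K ⊓ Q).one_mem, 1, P.one_mem, by simp⟩
      add_mem' := by
        rintro a b ⟨x, hx, p, hp, rfl⟩ ⟨y, hy, q, hq, rfl⟩
        obtain ⟨p', hp', heq⟩ := nf_mul _ _ hgP hp hq
        exact ⟨_, (K ⊓ Q).mul_mem hx hy, p', hp', heq⟩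
      neg_mem' := by
        rintro a ⟨x, hx, p, hp, rfl⟩
        obtain ⟨p', hp', heq⟩ := nf_inv _ hgP hp
        exact ⟨_, (K ⊓ Q).inv_mem hx, p', hp', heq⟩ } with hZ
  obtain ⟨a, ha⟩ := Int.subgroup_cyclic Z
  have haZ : a ∈ Z := ha ▸ AddSubgroup.subset_closure rfl
  obtain ⟨x0, hx0, p0, hp0, hx0eq⟩ := haZ
  have key : K ⊓ Q = (K ⊓ P) ⊔ Subgroup.zpowers x0 := by
    apply le_antisymm
    · intro x hx
      obtain ⟨p, hp, k, rfl⟩ := hnf x hx.2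
      have hkZ : k ∈ Z := ⟨_, hx, p, hp, rfl⟩
      rw [ha, AddSubgroup.mem_closure_singleton] at hkZ
      obtain ⟨m, hm⟩ := hkZ
      obtain ⟨q, hq, hq'⟩ := nf_zpow a hgP hp0 m
      rw [← hx0eq] at hq'
      obtain ⟨qi, hqi, hqi'⟩ := nf_inv (a * m) hgP hq
      obtain ⟨p', hp', hp''⟩ := nf_mul k (-(a * m)) hgP hp hqi
      have hy : p * g ^ k * (x0 ^ m)⁻¹ = p' := by
        rw [hq', hqi', hp'']
        have : k + -(a * m) = 0 := by rw [← hm, zsmul_eq_mul]; push_cast; ring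
        rw [this, zpow_zero, mul_one]
      have hyK : p * g ^ k * (x0 ^ m)⁻¹ ∈ K := K.mul_mem hx.1 (K.inv_mem (K.zpow_mem hx0.1 m))
      have : p * g ^ k = (p * g ^ k * (x0 ^ m)⁻¹) * x0 ^ m := by group
      rw [this]
      exact Subgroup.mul_mem _
        (Subgroup.mem_sup_left ⟨hyK, hy ▸ hp'⟩)
        (Subgroup.mem_sup_right (Subgroup.zpow_mem _ (Subgroup.mem_zpowers x0) m))
    · exact sup_le (inf_le_inf le_rfl hPQ) (by
        rw [Subgroup.zpowers_le]; exact hx0)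
  classical
  obtain ⟨S, hS⟩ := hfg
  refine ⟨insert x0 S, ?_⟩
  rw [key, ← hS, Finset.coe_insert, Set.insert_eq, Subgroup.closure_union,
    ← Subgroup.zpowers_eq_closure, sup_comm]
end Poly

section PolyLemmas
variable {G : Type*} [Group G]

lemma step_comm {P Q : Subgroup G} {g : G}
    (hconj : ∀ x ∈ Q, ∀ k ∈ P, x * k * x⁻¹ ∈ P)
    (hg : g ∈ Q) (hgen : Q ≤ P ⊔ Subgroup.zpowers g) :
    ∀ x ∈ Q, ∀ y ∈ Q, x * y * x⁻¹ * y⁻¹ ∈ P := by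
  have hgP : ∀ c : ℤ, ∀ k ∈ P, g ^ c * k * (g ^ c)⁻¹ ∈ P :=
    fun c k hk => hconj _ (Q.zpow_mem hg c) _ hk
  intro x hx y hy
  obtain ⟨p, hp, a, rfl⟩ := nf_of_mem hconj hg hgen x hx
  obtain ⟨q, hq, b, rfl⟩ := nf_of_mem hconj hg hgen y hy
  obtain ⟨p1, hp1, e1⟩ := nf_mul a b hgP hp hq
  obtain ⟨pi, hpi, ei⟩ := nf_inv a hgP hp
  obtain ⟨qi, hqi, eqi⟩ := nf_inv b hgP hq
  obtain ⟨p2, hp2, e2⟩ := nf_mul (a + b) (-a) hgP hp1 hpi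
  obtain ⟨p3, hp3, e3⟩ := nf_mul (a + b + -a) (-b) hgP hp2 hqi
  rw [ei, eqi, e1, e2, e3]
  have : a + b + -a + -b = 0 := by ring
  rw [this, zpow_zero, mul_one]
  exact hp3

lemma IsPolycyclic.subgroup_fg (hpc : IsPolycyclic G) (K : Subgroup G) : K.FG := by
  obtain ⟨n, s, h0, hlast, hstep⟩ := hpc
  have key := chain_induction (s := s) (fun P => (K ⊓ P).FG)
    (by show (K ⊓ s 0).FG; rw [h0, inf_bot_eq]; exact ⟨∅, by simp⟩)
    (fun i hfg => by
      obtain ⟨hle, hconj, g, hg, hgen⟩ := hstep i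
      exact step_fg hle hconj hg hgen K hfg)
  have key' : (K ⊓ s (Fin.last n)).FG := key
  rwa [hlast, inf_top_eq] at key'

lemma IsPolycyclic.isSolvable (hpc : IsPolycyclic G) : IsSolvable G := by
  obtain ⟨n, s, h0, hlast, hstep⟩ := hpc
  have key : ∀ k : ℕ, k ≤ n → ∀ hlt : n - k < n + 1, derivedSeries G k ≤ s ⟨n - k, hlt⟩ := by
    intro k
    induction k with
    | zero =>
      intro _ hlt
      rw [derivedSeries_zero]
      have he : (⟨n - 0, hlt⟩ : Fin (n + 1)) = Fin.last n := by
        apply Fin.ext; simp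
      rw [he, hlast]
    | succ k ih =>
      intro hk hlt
      have hk' : k ≤ n := by omega
      have hlt2 : n - (k + 1) < n := by omega
      obtain ⟨hle, hconj, g, hg, hgen⟩ := hstep ⟨n - (k + 1), hlt2⟩
      have hsucc : (Fin.succ ⟨n - (k + 1), hlt2⟩ : Fin (n + 1)) = ⟨n - k, by omega⟩ := by
        apply Fin.ext; simp; omega
      have h1 : derivedSeries G k ≤ s (Fin.succ ⟨n - (k + 1), hlt2⟩) := by
        rw [hsucc]; exact ih hk' (by omega)
      rw [derivedSeries_succ]
      refine le_trans (Subgroup.commutator_mono h1 h1) ?_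
      rw [Subgroup.commutator_le]
      intro g1 hg1 g2 hg2
      have := step_comm hconj hg hgen g1 hg1 g2 hg2
      have hcast : (Fin.castSucc ⟨n - (k + 1), hlt2⟩ : Fin (n + 1)) = ⟨n - (k + 1), hlt⟩ := by
        apply Fin.ext; simp
      rwa [hcast] at this
  refine ⟨⟨n, ?_⟩⟩
  have hle := key n le_rfl (by omega)
  have h00 : (⟨n - n, by omega⟩ : Fin (n + 1)) = 0 := by apply Fin.ext; simp
  rw [h00, h0] at hle
  exact le_bot_iff.mp hle

lemma IsPolycyclic.map {G' : Type*} [Group G'] (f : G →* G') (hf : Function.Surjective f)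
    (hpc : IsPolycyclic G) : IsPolycyclic G' := by
  obtain ⟨n, s, h0, hlast, hstep⟩ := hpc
  refine ⟨n, fun i => (s i).map f,
    by show (s 0).map f = ⊥; rw [h0]; exact Subgroup.map_bot f,
    by show (s (Fin.last n)).map f = ⊤; rw [hlast]; exact Subgroup.map_top_of_surjective f hf,
    fun i => ?_⟩
  obtain ⟨hle, hconj, g, hg, hgen⟩ := hstep i
  refine ⟨Subgroup.map_mono hle, ?_, f g, Subgroup.mem_map_of_mem f hg, ?_⟩
  · rintro x ⟨x', hx', rfl⟩ k ⟨k', hk', rfl⟩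
    exact ⟨x' * k' * x'⁻¹, hconj _ hx' _ hk', by simp⟩
  · calc (s i.succ).map f ≤ (s i.castSucc ⊔ Subgroup.zpowers g).map f :=
        Subgroup.map_mono hgen
      _ = (s i.castSucc).map f ⊔ Subgroup.zpowers (f g) := by
        rw [Subgroup.map_sup, MonoidHom.map_zpowers]

lemma IsPolycyclic.finite_of_torsion (hpc : IsPolycyclic G)
    (ht : ∀ x : G, ∃ e : ℕ, e ≠ 0 ∧ x ^ e = 1) : Finite G := by
  obtain ⟨n, s, h0, hlast, hstep⟩ := hpc
  have key := chain_induction (s := s) (fun P => (P : Set G).Finite)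
    (by show (s 0 : Set G).Finite; rw [h0]; simpa using Set.finite_singleton (1 : G))
    (fun i hfin => by
      obtain ⟨hle, hconj, g, hg, hgen⟩ := hstep i
      obtain ⟨e, he, hge⟩ := ht g
      have hsub : (s i.succ : Set G) ⊆
          ⋃ k : Fin e, (fun p => p * g ^ (k : ℕ)) '' (s i.castSucc : Set G) := by
        intro x hx
        obtain ⟨p, hp, m, rfl⟩ := nf_of_mem hconj hg hgen x hx
        have hme : (m % (e : ℤ)).toNat < e := by
          have h1 : 0 ≤ m % (e : ℤ) := Int.emod_nonneg m (by exact_mod_cast he)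
          have h2 : m % (e : ℤ) < e := Int.emod_lt_of_pos m (by positivity)
          omega
        have hgm : g ^ m = g ^ ((m % (e : ℤ)).toNat : ℕ) := by
          have : g ^ (e : ℤ) = 1 := by exact_mod_cast hge
          conv_lhs => rw [← Int.emod_add_mul_ediv m (e : ℤ)]
          rw [zpow_add, zpow_mul, this, one_zpow, mul_one, ← zpow_natCast]
          congr 1
          have h1 : 0 ≤ m % (e : ℤ) := Int.emod_nonneg m (by exact_mod_cast he)
          omega
        exact Set.mem_iUnion.mpr ⟨⟨_, hme⟩, p, hp, by rw [← hgm]⟩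
      exact Set.Finite.subset (Set.finite_iUnion fun k => hfin.image _) hsub)
  have key' : ((s (Fin.last n)) : Set G).Finite := key
  rw [hlast] at key'
  rw [← Set.finite_univ_iff]
  simpa using key'

end PolyLemmas

section Infinite
variable {G : Type*} [Group G]

lemma prod_ofFn_eq_single : ∀ (r : ℕ) (g : Fin r → G) (j0 : Fin r),
    (∀ j, j ≠ j0 → g j = 1) → (List.ofFn g).prod = g j0 := by
  intro r
  induction r with
  | zero => intro g j0; exact absurd j0.2 (by omega)
  | succ r ih =>
    intro g j0 h1
    rw [List.ofFn_succ, List.prod_cons]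
    rcases Fin.eq_zero_or_eq_succ j0 with hj | ⟨k, hk⟩
    · subst hj
      have : (List.ofFn fun j : Fin r => g j.succ).prod = 1 := by
        apply List.prod_eq_one
        intro x hx
        obtain ⟨j, rfl⟩ := List.mem_ofFn.mp hx
        exact h1 j.succ (Fin.succ_ne_zero j)
      rw [this, mul_one]
    · subst hk
      rw [h1 0 (Ne.symm (Fin.succ_ne_zero k)), one_mul]
      exact ih (fun j => g j.succ) k (fun j hj => h1 j.succ (by
        intro hc
        exact hj (Fin.succ_injective r hc)))

lemma single_prod_eq {r : ℕ} (f : Fin r → G) (j0 : Fin r) (v : ℤ) :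
    (List.ofFn fun j => f j ^ (Pi.single j0 v : Fin r → ℤ) j).prod = f j0 ^ v := by
  classical
  rw [prod_ofFn_eq_single _ _ j0]
  · simp
  · intro b hb; simp [Pi.single_eq_of_ne hb]

lemma infinite_of_hirsch {h : ℕ} (hh : HasHirschLength G h) (hpos : 1 ≤ h) : Infinite G := by
  obtain ⟨n, s, r, ⟨h0, hlast, hstep⟩, hsum⟩ := hh
  have : ∃ i, r i ≠ 0 := by
    by_contra hc
    push_neg at hc
    rw [Finset.sum_eq_zero (fun i _ => hc i)] at hsum
    omega
  obtain ⟨i, hri⟩ := this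
  obtain ⟨hle, hconj, hdis⟩ := hstep i
  rcases hdis with ⟨_, h0'⟩ | ⟨_, _, f, hf, hind⟩
  · exact absurd h0' hri
  by_contra hinf
  rw [not_infinite_iff_finite] at hinf
  have hcard : Nat.card G ≠ 0 := Nat.card_pos.ne'
  set j0 : Fin (r i) := ⟨0, by omega⟩
  have hdep := hind (Pi.single j0 1) (Nat.card G) hcard
  rw [single_prod_eq f j0 1] at hdep
  have hmem : (f j0 ^ (1 : ℤ)) ^ Nat.card G ∈ s i.castSucc := by
    rw [zpow_one, pow_card_eq_one']
    exact (s i.castSucc).one_mem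
  have := congrFun (hdep hmem) j0
  simp at this

end Infinite

section RankBound
open Module Submodule

variable {G : Type*} [Group G]

lemma rank_le_hirsch {n : ℕ} {s : Fin (n + 1) → Subgroup G} {rr : Fin n → ℕ}
    (hcn : HirschChain n s rr) {A : Subgroup G} {r : ℕ}
    (e : ↥A ≃* Multiplicative (Fin r → ℤ)) : r ≤ ∑ i, rr i := by
  classical
  obtain ⟨h0, hlast, hstep⟩ := hcn
  set castA : (Fin r → ℤ) →+ (Fin r → ℚ) :=
    { toFun := fun v j => (v j : ℚ)
      map_zero' := by funext j; simp
      map_add' := by intro a b; funext j; simp } with hcastA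
  set ι : ↥A →* Multiplicative (Fin r → ℚ) :=
    (AddMonoidHom.toMultiplicative castA).comp e.toMonoidHom with hι
  set ν : ↥A → (Fin r → ℚ) := fun a => (ι a).toAdd with hν
  have hν1 : ν 1 = 0 := by simp [hν]
  have hνmul : ∀ a b : ↥A, ν (a * b) = ν a + ν b := by intro a b; simp [hν]
  have hνpow : ∀ (a : ↥A) (k : ℕ), ν (a ^ k) = (k : ℚ) • ν a := by
    intro a k
    show ((ι (a ^ k)).toAdd) = (k : ℚ) • (ι a).toAdd
    rw [map_pow, toAdd_pow, Nat.cast_smul_eq_nsmul]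
  have hνzpow : ∀ (a : ↥A) (c : ℤ), ν (a ^ c) = (c : ℚ) • ν a := by
    intro a c
    show ((ι (a ^ c)).toAdd) = (c : ℚ) • (ι a).toAdd
    rw [map_zpow, toAdd_zpow, Int.cast_smul_eq_zsmul]
  have hνprod : ∀ l : List ↥A, ν l.prod = (l.map ν).sum := by
    intro l
    induction l with
    | nil => simpa using hν1
    | cons a l ih => rw [List.prod_cons, hνmul, List.map_cons, List.sum_cons, ih]
  set SetA : Fin (n + 1) → Set (Fin r → ℚ) := fun i => ν '' {a : ↥A | (a : G) ∈ s i} with hSetA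
  set Φ : Fin (n + 1) → Submodule ℚ (Fin r → ℚ) := fun i => span ℚ (SetA i) with hΦ
  set SS : ℕ → ℕ := fun m => ∑ j ∈ Finset.univ.filter (fun j : Fin n => (j : ℕ) < m), rr j
    with hSS
  have key : ∀ m : ℕ, ∀ hm : m < n + 1, finrank ℚ (Φ ⟨m, hm⟩) ≤ SS m := by
    intro m
    induction m with
    | zero =>
      intro hm
      have hz : (⟨0, hm⟩ : Fin (n + 1)) = 0 := by apply Fin.ext; simp
      have hset : SetA ⟨0, hm⟩ = {0} := by
        show ν '' {a : ↥A | (a : G) ∈ s ⟨0, hm⟩} = {0}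
        rw [hz]
        have h1 : {a : ↥A | (a : G) ∈ s 0} = {1} := by
          ext a
          simp [h0, Subgroup.mem_bot, OneMemClass.coe_eq_one]
        rw [h1, Set.image_singleton, hν1]
      have : Φ ⟨0, hm⟩ = ⊥ := by
        show span ℚ (SetA ⟨0, hm⟩) = ⊥
        rw [hset, Submodule.span_zero_singleton]
      rw [this, finrank_bot]
      exact Nat.zero_le _
    | succ m ih =>
      intro hm
      have hmn : m < n := by omega
      have hm' : m < n + 1 := by omega
      have ihm := ih hm'
      set i : Fin n := ⟨m, hmn⟩ with hi
      have hicast : i.castSucc = ⟨m, hm'⟩ := rfl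
      have hisucc : i.succ = ⟨m + 1, hm⟩ := rfl
      obtain ⟨hle, hconj, hdis⟩ := hstep i
      have hSS1 : SS (m + 1) = rr i + SS m := by
        show (∑ j ∈ Finset.univ.filter (fun j : Fin n => (j : ℕ) < m + 1), rr j) = _
        have hins : Finset.univ.filter (fun j : Fin n => (j : ℕ) < m + 1)
            = insert i (Finset.univ.filter (fun j : Fin n => (j : ℕ) < m)) := by
          ext j
          simp only [Finset.mem_filter, Finset.mem_univ, true_and, Finset.mem_insert, Fin.ext_iff]
          show (j : ℕ) < m + 1 ↔ (j : ℕ) = m ∨ (j : ℕ) < m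
          omega
        rw [hins, Finset.sum_insert (by simp [hi])]
      rcases hdis with ⟨hrel, _hr0⟩ | ⟨_hab, hdep, _hex⟩
      · -- finite factor
        have hsub : Φ ⟨m + 1, hm⟩ ≤ Φ ⟨m, hm'⟩ := by
          show span ℚ (SetA ⟨m + 1, hm⟩) ≤ span ℚ (SetA ⟨m, hm'⟩)
          apply span_le.mpr
          rintro _ ⟨a, ha, rfl⟩
          have ha' : (a : G) ∈ s i.succ := by rw [hisucc]; exact ha
          haveI hnormal : ((s i.castSucc).subgroupOf (s i.succ)).Normal := by
            constructor
            intro x hx g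
            rw [Subgroup.mem_subgroupOf] at hx ⊢
            simpa using hconj _ g.2 _ hx
          haveI hfi : ((s i.castSucc).subgroupOf (s i.succ)).FiniteIndex := ⟨hrel⟩
          set idx := ((s i.castSucc).subgroupOf (s i.succ)).index with hidxdef
          have hidx : idx ≠ 0 := hfi.index_ne_zero
          have hpowmem := Subgroup.pow_index_mem
            ((s i.castSucc).subgroupOf (s i.succ)) ⟨(a : G), ha'⟩
          rw [Subgroup.mem_subgroupOf] at hpowmem
          have hG : ((a : G)) ^ idx ∈ s i.castSucc := by simpa using hpowmem
          have hG' : ((a ^ idx : ↥A) : G) ∈ s ⟨m, hm'⟩ := by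
            rw [← hicast]
            simpa using hG
          have hmem2 : ν (a ^ idx) ∈ span ℚ (SetA ⟨m, hm'⟩) :=
            subset_span ⟨a ^ idx, hG', rfl⟩
          have hrw : ν a = (idx : ℚ)⁻¹ • ν (a ^ idx) := by
            rw [hνpow, inv_smul_smul₀ (by exact_mod_cast hidx)]
          rw [hrw]
          exact Submodule.smul_mem _ _ hmem2
        calc finrank ℚ (Φ ⟨m + 1, hm⟩) ≤ finrank ℚ (Φ ⟨m, hm'⟩) := Submodule.finrank_mono hsub
          _ ≤ SS m := ihm
          _ ≤ SS (m + 1) := by rw [hSS1]; omega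
      · -- abelian factor of rank rr i
        set U := Φ ⟨m, hm'⟩ with hU
        set q := U.mkQ with hq
        have claim1 : ∀ w : Fin (rr i + 1) → ↥A, (∀ j, ((w j : G)) ∈ s i.succ) →
            ¬ LinearIndependent ℚ (fun j => q (ν (w j))) := by
          intro w hw hli
          obtain ⟨c, hc, k, hk, hmem⟩ := hdep (fun j => (w j : G)) hw
          set x' : ↥A := ((List.ofFn fun j => w j ^ c j).prod) ^ k with hx'
          have hx'coe : (x' : G) = ((List.ofFn fun j => ((w j : G)) ^ c j).prod) ^ k := by
            show A.subtype x' = _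
            rw [hx', map_pow, map_list_prod, List.map_ofFn]
            have hfun : (⇑A.subtype ∘ fun j => w j ^ c j) = (fun j => ((w j : G)) ^ c j) := by
              funext j
              rw [Function.comp_apply, map_zpow]
              rfl
            rw [hfun]
          have hx'mem : (x' : G) ∈ s ⟨m, hm'⟩ := by
            rw [hx'coe, ← hicast]; exact hmem
          have hνx'U : ν x' ∈ U := by
            rw [hU]
            exact subset_span ⟨x', hx'mem, rfl⟩
          have hcalc : ν x' = (k : ℚ) • ∑ j, (c j : ℚ) • ν (w j) := by
            rw [hx', hνpow, hνprod, List.map_ofFn]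
            congr 1
            rw [List.sum_ofFn]
            apply Finset.sum_congr rfl
            intro j _
            exact hνzpow (w j) (c j)
          have hq0 : q (ν x') = 0 := (Submodule.Quotient.mk_eq_zero U).mpr hνx'U
          rw [hcalc, map_smul, map_sum] at hq0
          simp only [map_smul] at hq0
          rcases smul_eq_zero.mp hq0 with hc0 | hsum0
          · exact (Nat.cast_ne_zero.mpr hk) hc0
          · have hall := Fintype.linearIndependent_iff.mp hli (fun j => (c j : ℚ)) hsum0
            apply hc
            funext j
            have hj := hall j
            rw [Int.cast_eq_zero] at hj
            show c j = (0 : Fin (rr i + 1) → ℤ) j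
            rw [Pi.zero_apply]
            exact hj
        set T := q '' (SetA ⟨m + 1, hm⟩) with hT
        have hwit : ∀ v ∈ T, ∃ w : ↥A, ((w : G)) ∈ s i.succ ∧ q (ν w) = v := by
          rintro v ⟨_, ⟨w, hw, rfl⟩, rfl⟩
          exact ⟨w, by rw [hisucc]; exact hw, rfl⟩
        have claim2 : finrank ℚ (span ℚ T) ≤ rr i := by
          obtain ⟨t, htT, htspan, htind⟩ := exists_linearIndependent ℚ T
          have htfin : t.Finite := htind.setFinite
          haveI := htfin.fintype
          have hcard : t.toFinset.card ≤ rr i := by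
            by_contra hcard
            push_neg at hcard
            obtain ⟨u, hut, hcardu⟩ := Finset.exists_subset_card_eq (Nat.succ_le_of_lt hcard)
            set φ := (Finset.equivFinOfCardEq hcardu).symm with hφ
            have hmemT : ∀ j : Fin (rr i + 1), ((φ j : (Fin r → ℚ) ⧸ U)) ∈ T := by
              intro j
              apply htT
              have := (φ j).2
              have := hut this
              simpa using this
            choose w hw hqw using fun j => hwit _ (hmemT j)
            apply claim1 w hw
            have hfEq : (fun j => q (ν (w j))) = (fun j => ((φ j : (Fin r → ℚ) ⧸ U))) := by
              funext j; exact hqw j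
            rw [hfEq]
            have hinj : Function.Injective (fun j : Fin (rr i + 1) =>
                (⟨(φ j : (Fin r → ℚ) ⧸ U), by
                  have := (φ j).2; have := hut this; simpa using this⟩ : ↥t)) := by
              intro a b hab
              have h2 := Subtype.ext_iff.mp hab
              exact φ.injective (Subtype.ext h2)
            have := htind.comp _ hinj
            exact this
          calc finrank ℚ (span ℚ T) = finrank ℚ (span ℚ t) := by rw [htspan]
            _ = t.toFinset.card := finrank_span_set_eq_card htind
            _ ≤ rr i := hcard
        set f := q.comp (Φ ⟨m + 1, hm⟩).subtype with hf
        have hrange : LinearMap.range f = span ℚ T := by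
          rw [hf, LinearMap.range_comp, Submodule.range_subtype, hT]
          show Submodule.map q (span ℚ (SetA ⟨m + 1, hm⟩)) = _
          rw [Submodule.map_span]
        have h1 : finrank ℚ (LinearMap.range f) ≤ rr i := by rw [hrange]; exact claim2
        have h2 : finrank ℚ (LinearMap.ker f) ≤ finrank ℚ U := by
          have hmaple : (LinearMap.ker f).map (Φ ⟨m + 1, hm⟩).subtype ≤ U := by
            rintro x ⟨y, hy, rfl⟩
            have hy0 : q ((Φ ⟨m + 1, hm⟩).subtype y) = 0 := hy
            exact (Submodule.Quotient.mk_eq_zero U).mp hy0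
          calc finrank ℚ (LinearMap.ker f)
              = finrank ℚ ((LinearMap.ker f).map (Φ ⟨m + 1, hm⟩).subtype) :=
                (Submodule.equivMapOfInjective _ (Submodule.injective_subtype _) _).finrank_eq
            _ ≤ finrank ℚ U := Submodule.finrank_mono hmaple
        have hrnk := LinearMap.finrank_range_add_finrank_ker f
        calc finrank ℚ (Φ ⟨m + 1, hm⟩)
            = finrank ℚ (LinearMap.range f) + finrank ℚ (LinearMap.ker f) := hrnk.symm
          _ ≤ rr i + SS m := add_le_add h1 (le_trans h2 ihm)
          _ = SS (m + 1) := hSS1.symm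
  have hfinal := key n (by omega)
  have hlast' : (⟨n, by omega⟩ : Fin (n + 1)) = Fin.last n := rfl
  have hνsymm : ∀ v : Fin r → ℤ, ν (e.symm (Multiplicative.ofAdd v)) = fun j => ((v j : ℚ)) := by
    intro v
    show ((ι (e.symm (Multiplicative.ofAdd v))).toAdd) = _
    rw [hι]
    simp only [MonoidHom.comp_apply, MulEquiv.coe_toMonoidHom, MulEquiv.apply_symm_apply]
    rfl
  have htop : Φ (Fin.last n) = ⊤ := by
    rw [eq_top_iff, ← (Pi.basisFun ℚ (Fin r)).span_eq]
    apply span_le.mpr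
    rintro _ ⟨j, rfl⟩
    show Pi.basisFun ℚ (Fin r) j ∈ span ℚ (SetA (Fin.last n))
    refine subset_span ⟨e.symm (Multiplicative.ofAdd (Pi.single j 1)), by rw [hlast]; trivial, ?_⟩
    rw [hνsymm]
    funext jj
    rw [Pi.basisFun_apply]
    by_cases hjj : jj = j
    · subst hjj; simp
    · simp [Pi.single_eq_of_ne hjj]
  have hr : finrank ℚ (Φ (Fin.last n)) = r := by
    rw [htop, finrank_top, Module.finrank_pi]
    simp
  have hSSn : SS n = ∑ i0, rr i0 := by
    show (∑ j ∈ Finset.univ.filter (fun j : Fin n => (j : ℕ) < n), rr j) = _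
    congr 1
    apply Finset.filter_true_of_mem
    intro j _
    exact j.2
  rw [hlast'] at hfinal
  omega

end RankBound

/-- In any virtually polycyclic group `G` with no nontrivial finite normal subgroup
and positive Hirsch length `h(G)`, there exists a characteristic subgroup `A` of `G`
with `A ≅ ℤʳ` for some `1 ≤ r ≤ h(G)`. -/
theorem stmt_19 (G : Type*) [Group G]
    (hvp : IsVirtuallyPolycyclic G)
    (h : ℕ) (hh : HasHirschLength G h) (hpos : 1 ≤ h)
    (hnofin : ∀ N : Subgroup G, N.Normal → Finite N → N = ⊥) :
    ∃ (A : Subgroup G) (r : ℕ), A.Characteristic ∧ 1 ≤ r ∧ r ≤ h ∧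
      Nonempty (A ≃* Multiplicative (Fin r → ℤ)) := by
  classical
  obtain ⟨H, hHind, hHpc⟩ := hvp
  have hGinf : Infinite G := infinite_of_hirsch hh hpos
  set N := H.normalCore with hNdef
  haveI hHfi : H.FiniteIndex := ⟨hHind⟩
  haveI hNn : N.Normal := H.normalCore_normal
  haveI hNfi : N.FiniteIndex := Subgroup.finiteIndex_normalCore H
  have hNle : N ≤ H := H.normalCore_le
  set M := N.index with hM
  have hM0 : M ≠ 0 := hNfi.index_ne_zero
  set W : Subgroup G := Subgroup.closure {x : G | ∃ g : G, x = g ^ M} with hW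
  have hWN : W ≤ N := by
    rw [hW, Subgroup.closure_le]
    rintro x ⟨g, rfl⟩
    exact Subgroup.pow_index_mem N g
  have hWH : W ≤ H := le_trans hWN hNle
  have hWmap : ∀ φ : G ≃* G, W.map φ.toMonoidHom = W := by
    intro φ
    rw [hW, MonoidHom.map_closure]
    congr 1
    ext x
    constructor
    · rintro ⟨y, ⟨g, rfl⟩, rfl⟩
      exact ⟨φ g, by rw [map_pow]; rfl⟩
    · rintro ⟨g, rfl⟩
      refine ⟨φ.symm g ^ M, ⟨φ.symm g, rfl⟩, ?_⟩
      show φ (φ.symm g ^ M) = g ^ M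
      rw [map_pow]
      simp
  have hWchar : W.Characteristic := Subgroup.characteristic_iff_map_eq.mpr hWmap
  -- the quotient G / W is finite
  set mk : G →* G ⧸ W := QuotientGroup.mk' W with hmk
  have hmks : Function.Surjective mk := QuotientGroup.mk'_surjective W
  have htorQ : ∀ x : G ⧸ W, x ^ M = 1 := by
    intro x
    obtain ⟨g, rfl⟩ := hmks x
    rw [← map_pow, hmk, QuotientGroup.mk'_apply, QuotientGroup.eq_one_iff]
    exact Subgroup.subset_closure ⟨g, rfl⟩
  have hHQpc : IsPolycyclic ↥(H.map mk) :=
    IsPolycyclic.map (mk.subgroupMap H) (mk.subgroupMap_surjective H) hHpc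
  haveI hHQfin : Finite ↥(H.map mk) := by
    apply hHQpc.finite_of_torsion
    intro x
    refine ⟨M, hM0, ?_⟩
    apply Subtype.ext
    push_cast
    exact htorQ _
  have hHQind : (H.map mk).index ≠ 0 := by
    intro hz
    have hd := Subgroup.index_map_dvd H hmks
    rw [hz] at hd
    exact hHind (zero_dvd_iff.mp hd)
  haveI : Finite ((G ⧸ W) ⧸ (H.map mk)) := by
    apply Nat.finite_of_card_ne_zero
    rwa [← Subgroup.index_eq_card]
  haveI hQfin : Finite (G ⧸ W) :=
    Finite.of_equiv _ (Subgroup.groupEquivQuotientProdSubgroup (s := H.map mk)).symm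
  have hWind : W.index ≠ 0 := by
    rw [Subgroup.index_eq_card]
    exact Nat.card_ne_zero.mpr ⟨inferInstance, inferInstance⟩
  -- W is infinite, hence nontrivial
  haveI hWinf : Infinite ↥W := by
    by_contra hfin
    rw [not_infinite_iff_finite] at hfin
    haveI := hfin
    have : Finite G := Finite.of_equiv _ (Subgroup.groupEquivQuotientProdSubgroup (s := W)).symm
    exact this.not_infinite hGinf
  haveI hWnt : Nontrivial ↥W := inferInstance
  -- W is solvable
  haveI hHsolv : Group.IsSolvable ↥H := hHpc.isSolvable
  haveI hWsolv : Group.IsSolvable ↥W := by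
    haveI : Group.IsSolvable ↥(W.subgroupOf H) := inferInstance
    exact solvable_of_surjective (f := (Subgroup.subgroupOfEquivOfLe hWH).toMonoidHom) (Subgroup.subgroupOfEquivOfLe hWH).surjective
  -- last nontrivial term of derived series of W
  have hex : ∃ k, derivedSeries ↥W k = ⊥ := hWsolv.solvable
  set d0 := Nat.find hex with hd0def
  have hd0 : derivedSeries ↥W d0 = ⊥ := Nat.find_spec hex
  have hd0pos : d0 ≠ 0 := by
    intro h00
    rw [h00, derivedSeries_zero] at hd0
    obtain ⟨a, b, hab⟩ := hWnt
    apply hab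
    have ha : a ∈ (⊥ : Subgroup ↥W) := hd0 ▸ Subgroup.mem_top a
    have hb : b ∈ (⊥ : Subgroup ↥W) := hd0 ▸ Subgroup.mem_top b
    rw [Subgroup.mem_bot] at ha hb
    rw [ha, hb]
  set d := d0 - 1 with hd
  have hdsb : derivedSeries ↥W (d + 1) = ⊥ := by
    have : d + 1 = d0 := by omega
    rw [this]; exact hd0
  have hdsnb : derivedSeries ↥W d ≠ ⊥ := Nat.find_min hex (by omega)
  set A : Subgroup G := (derivedSeries ↥W d).map W.subtype with hA
  have hAW : A ≤ W := Subgroup.map_subtype_le _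
  have hAne : A ≠ ⊥ := by
    intro hbot
    apply hdsnb
    rw [hA, Subgroup.map_eq_bot_iff, Subgroup.ker_subtype, le_bot_iff] at hbot
    exact hbot
  have hAcomm : ∀ x ∈ A, ∀ y ∈ A, x * y = y * x := by
    rintro _ ⟨a, ha, rfl⟩ _ ⟨b, hb, rfl⟩
    open scoped commutatorElement in
    have hab : ⁅a, b⁆ ∈ derivedSeries ↥W (d + 1) := by
      rw [derivedSeries_succ]
      exact Subgroup.commutator_mem_commutator ha hb
    rw [hdsb, Subgroup.mem_bot] at hab
    have hcomm := commutatorElement_eq_one_iff_mul_comm.mp hab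
    show W.subtype a * W.subtype b = W.subtype b * W.subtype a
    rw [← map_mul, ← map_mul, hcomm]
  -- A is characteristic
  have hAmap : ∀ φ : G ≃* G, A.map φ.toMonoidHom = A := by
    intro φ
    have hres : ∀ w : G, w ∈ W → φ w ∈ W := by
      intro w hw
      rw [← hWmap φ]
      exact ⟨w, hw, rfl⟩
    set ψ : ↥W →* ↥W :=
      { toFun := fun w => ⟨φ w, hres w w.2⟩
        map_one' := by apply Subtype.ext; simp
        map_mul' := by intro a b; apply Subtype.ext; simp } with hψ
    have hψs : Function.Surjective ψ := by
      intro w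
      have hw' : (φ.symm (w : G)) ∈ W := by
        have hmem : (w : G) ∈ W.map φ.toMonoidHom := by rw [hWmap φ]; exact w.2
        obtain ⟨y, hy, hyeq⟩ := hmem
        have : φ.symm (w : G) = y := by rw [← hyeq]; simp
        rw [this]; exact hy
      refine ⟨⟨φ.symm (w : G), hw'⟩, ?_⟩
      apply Subtype.ext
      simp [hψ]
    have hds := map_derivedSeries_eq hψs d
    have hcomp : φ.toMonoidHom.comp W.subtype = W.subtype.comp ψ := by
      ext w; rfl
    rw [hA, Subgroup.map_map, hcomp, ← Subgroup.map_map, hds]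
  have hAchar : A.Characteristic := Subgroup.characteristic_iff_map_eq.mpr hAmap
  -- finitely generated subgroups
  have hfgsub : ∀ K : Subgroup G, K ≤ H → Group.FG ↥K := by
    intro K hKH
    have h1 : (K.subgroupOf H).FG := hHpc.subgroup_fg _
    haveI h2 : Group.FG ↥(K.subgroupOf H) := (Group.fg_iff_subgroup_fg _).mpr h1
    exact Group.fg_of_surjective (f := (Subgroup.subgroupOfEquivOfLe hKH).toMonoidHom) (Subgroup.subgroupOfEquivOfLe hKH).surjective
  -- torsion subgroup of A
  set T : Subgroup G :=
    { carrier := {x | x ∈ A ∧ ∃ nn : ℕ, nn ≠ 0 ∧ x ^ nn = 1}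
      one_mem' := ⟨A.one_mem, 1, one_ne_zero, one_pow 1⟩
      mul_mem' := by
        rintro x y ⟨hxA, nx, hnx, hx1⟩ ⟨hyA, ny, hny, hy1⟩
        refine ⟨A.mul_mem hxA hyA, nx * ny, Nat.mul_ne_zero hnx hny, ?_⟩
        have hcomm : Commute x y := hAcomm x hxA y hyA
        calc (x * y) ^ (nx * ny) = x ^ (nx * ny) * y ^ (nx * ny) := hcomm.mul_pow _
          _ = (x ^ nx) ^ ny * (y ^ ny) ^ nx := by
              rw [pow_mul x nx ny, mul_comm nx ny, pow_mul y ny nx]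
          _ = 1 := by rw [hx1, hy1, one_pow, one_pow, one_mul]
      inv_mem' := by
        rintro x ⟨hxA, nx, hnx, hx1⟩
        exact ⟨A.inv_mem hxA, nx, hnx, by rw [inv_pow, hx1, inv_one]⟩ } with hT
  have hTA : T ≤ A := fun x hx => hx.1
  have hTmap : ∀ φ : G ≃* G, T.map φ.toMonoidHom = T := by
    intro φ
    ext x
    constructor
    · rintro ⟨y, ⟨hyA, nn, hnn, hy1⟩, rfl⟩
      refine ⟨?_, nn, hnn, by rw [← map_pow, hy1, map_one]⟩
      rw [← hAmap φ]
      exact ⟨y, hyA, rfl⟩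
    · rintro ⟨hxA, nn, hnn, hx1⟩
      refine ⟨φ.symm x, ⟨?_, nn, hnn, ?_⟩, by simp⟩
      · rw [← hAmap φ] at hxA
        obtain ⟨y, hy, hyeq⟩ := hxA
        have : φ.symm x = y := by rw [← hyeq]; simp
        rw [this]; exact hy
      · have : φ.symm x ^ nn = φ.symm (x ^ nn) := by rw [map_pow]
        rw [this, hx1, map_one]
  haveI hTchar : T.Characteristic := Subgroup.characteristic_iff_map_eq.mpr hTmap
  haveI hTnormal : T.Normal := inferInstance
  have hTfin : Finite ↥T := by
    haveI : Group.FG ↥T := hfgsub T (le_trans (le_trans hTA hAW) hWH)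
    letI : CommGroup ↥T :=
      { (inferInstance : Group ↥T) with
        mul_comm := fun a b => Subtype.ext (hAcomm _ a.2.1 _ b.2.1) }
    apply CommGroup.finite_of_fg_torsion
    intro x
    obtain ⟨hxA, nn, hnn, hx1⟩ := x.2
    rw [isOfFinOrder_iff_pow_eq_one]
    refine ⟨nn, Nat.pos_of_ne_zero hnn, ?_⟩
    apply Subtype.ext
    push_cast
    exact hx1
  have hTbot : T = ⊥ := hnofin T hTnormal hTfin
  have hAtorfree : ∀ x : ↥A, ∀ nn : ℕ, nn ≠ 0 → x ^ nn = 1 → x = 1 := by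
    intro x nn hnn hx
    have hxT : (x : G) ∈ T := by
      refine ⟨x.2, nn, hnn, ?_⟩
      have := congrArg (Subtype.val) hx
      push_cast at this
      exact this
    rw [hTbot, Subgroup.mem_bot] at hxT
    exact Subtype.ext hxT
  -- module structure
  letI cg : CommGroup ↥A :=
    { (inferInstance : Group ↥A) with
      mul_comm := fun a b => Subtype.ext (hAcomm _ a.2 _ b.2) }
  haveI hAfg : Group.FG ↥A := hfgsub A (le_trans hAW hWH)
  haveI : AddGroup.FG (Additive ↥A) := GroupFG.iff_add_fg.mp hAfg
  haveI : Module.Finite ℤ (Additive ↥A) := Module.Finite.iff_addGroup_fg.mpr inferInstance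
  haveI : NoZeroSMulDivisors ℤ (Additive ↥A) := by
    constructor
    intro cz x hzx
    by_cases hcz : cz = 0
    · left; exact hcz
    · right
      have h1 : (Additive.toMul x) ^ cz = 1 := by
        have := congrArg Additive.toMul hzx
        rwa [toMul_zsmul] at this
      have h2 : (Additive.toMul x) ^ (cz.natAbs) = 1 := by
        rcases Int.natAbs_eq cz with heq | heq
        · rw [← zpow_natCast, ← heq, h1]
        · rw [← zpow_natCast, (by omega : (cz.natAbs : ℤ) = -cz), zpow_neg, h1, inv_one]
      have := hAtorfree _ _ (Int.natAbs_ne_zero.mpr hcz) h2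
      exact toMul_eq_one.mp this
  haveI : Module.Free ℤ (Additive ↥A) := Module.free_of_finite_type_torsion_free'
  set r := Module.finrank ℤ (Additive ↥A) with hrdef
  set b := Module.finBasis ℤ (Additive ↥A) with hb
  set pre : ↥A ≃* Multiplicative (Additive ↥A) :=
    { toFun := fun a => Multiplicative.ofAdd (Additive.ofMul a)
      invFun := fun x => Additive.toMul (Multiplicative.toAdd x)
      left_inv := fun _ => rfl
      right_inv := fun _ => rfl
      map_mul' := fun _ _ => rfl } with hpre
  set eA : ↥A ≃* Multiplicative (Fin r → ℤ) :=
    pre.trans (AddEquiv.toMultiplicative b.equivFun.toAddEquiv) with heA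
  haveI : Nontrivial ↥A := (Subgroup.nontrivial_iff_ne_bot A).mpr hAne
  haveI : Nontrivial (Additive ↥A) := ⟨⟨Additive.ofMul 1,
    Additive.ofMul (Classical.choose (exists_ne (1 : ↥A))),
    fun hcon => (Classical.choose_spec (exists_ne (1 : ↥A))) (by
      have := congrArg Additive.toMul hcon
      exact this.symm)⟩⟩
  have hrpos : 1 ≤ r := Module.finrank_pos (R := ℤ) (M := Additive ↥A)
  obtain ⟨n, s, rr, hcn, hsum⟩ := hh
  have hrh : r ≤ h := by
    rw [← hsum]
    exact rank_le_hirsch hcn eA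
  exact ⟨A, r, hAchar, hrpos, hrh, ⟨eA⟩⟩
end
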